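/- For every F ≥ 0 and every nonnegative knowledge vector N ∈ ℤ^n, the feasible region Ω = {O ∈ ℤ^𝒩 : O ≥ 0, Σ_{i ∈ S̃(k)} O_i ≤ N_k' for all k, Σ_i N_i' - Σ_c (f(c)-1)O_c ≤ F} is nonempty, where N_k' = min(N_k, F). -/
import Mathlib


open Finset

/-- For every `F ≥ 0` and nonnegative knowledge vector `N`, the feasible region of the
optimisation problem (with effective knowledge `N' k = min (N k) F`) is nonempty. -/
theorem feasible_region_nonempty (n : ℕ) (hn : 2 ≤ n)
    (I : Fin (2 ^ n - n - 1) ≃ {s : Finset (Fin n) // 2 ≤ s.card})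
    (F : ℤ) (hF : 0 ≤ F) (N : Fin n → ℤ) (hN : ∀ k, 0 ≤ N k) :
    Set.Nonempty {O : Fin (2 ^ n - n - 1) → ℤ |
      (∀ i, 0 ≤ O i) ∧
      (∀ k : Fin n,
        ∑ i ∈ Finset.univ.filter (fun i => k ∈ (I i).1), O i ≤ min (N k) F) ∧
      (∑ k : Fin n, min (N k) F) -
          ∑ c : Fin (2 ^ n - n - 1), (((I c).1.card : ℤ) - 1) * O c ≤ F} := by
  classical
  set N' : Fin n → ℤ := fun k => min (N k) F with hN'def
  have hN'0 : ∀ k, 0 ≤ N' k := fun k => le_min (hN k) hF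
  have hN'F : ∀ k, N' k ≤ F := fun k => min_le_right _ _
  set L : ℤ → Finset (Fin n) := fun t => Finset.univ.filter (fun k => t < N' k) with hLdef
  set O : Fin (2 ^ n - n - 1) → ℤ :=
    fun c => (((Finset.Ico (0:ℤ) F).filter (fun t => L t = (I c).1)).card : ℤ) with hOdef
  have hO : ∀ c, O c = ∑ t ∈ Finset.Ico (0:ℤ) F, if L t = (I c).1 then (1:ℤ) else 0 := by
    intro c
    show ((((Finset.Ico (0:ℤ) F).filter (fun t => L t = (I c).1)).card : ℤ)) = _
    rw [Finset.card_filter]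
    push_cast
    rfl
  have master : ∀ w : Finset (Fin n) → ℤ,
      ∑ c, w (I c).1 * O c
        = ∑ t ∈ Finset.Ico (0:ℤ) F, if 2 ≤ (L t).card then w (L t) else 0 := by
    intro w
    have hterm : ∀ c, w (I c).1 * O c
        = ∑ t ∈ Finset.Ico (0:ℤ) F, if L t = (I c).1 then w (I c).1 else 0 := by
      intro c
      rw [hO c, Finset.mul_sum]
      refine Finset.sum_congr rfl fun t _ => ?_
      by_cases h : L t = (I c).1 <;> simp [h]
    calc ∑ c, w (I c).1 * O c
        = ∑ c, ∑ t ∈ Finset.Ico (0:ℤ) F, (if L t = (I c).1 then w (I c).1 else 0) :=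
          Finset.sum_congr rfl fun c _ => hterm c
      _ = ∑ t ∈ Finset.Ico (0:ℤ) F, ∑ c, (if L t = (I c).1 then w (I c).1 else 0) :=
          Finset.sum_comm
      _ = ∑ t ∈ Finset.Ico (0:ℤ) F, if 2 ≤ (L t).card then w (L t) else 0 := by
          refine Finset.sum_congr rfl fun t _ => ?_
          by_cases h2 : 2 ≤ (L t).card
          · rw [if_pos h2]
            have key : ∀ c : Fin (2 ^ n - n - 1),
                (L t = (I c).1) ↔ c = I.symm ⟨L t, h2⟩ := by
              intro c
              constructor
              · intro h
                rw [show (⟨L t, h2⟩ : {s : Finset (Fin n) // 2 ≤ s.card}) = I c from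
                  Subtype.ext h, Equiv.symm_apply_apply]
              · intro h; subst h; rw [Equiv.apply_symm_apply]
            calc ∑ c, (if L t = (I c).1 then w (I c).1 else 0)
                = ∑ c, (if c = I.symm ⟨L t, h2⟩ then w (L t) else 0) := by
                  refine Finset.sum_congr rfl fun c _ => ?_
                  by_cases h : L t = (I c).1
                  · rw [if_pos h, if_pos ((key c).1 h), ← h]
                  · rw [if_neg h, if_neg (fun hc => h ((key c).2 hc))]
              _ = w (L t) := by
                  rw [Finset.sum_ite_eq' Finset.univ]
                  simp
          · rw [if_neg h2]
            refine Finset.sum_eq_zero fun c _ => ?_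
            rw [if_neg]
            intro h
            exact h2 (by rw [h]; exact (I c).2)
  have hcount : ∀ k, ∑ t ∈ Finset.Ico (0:ℤ) F, (if t < N' k then (1:ℤ) else 0) = N' k := by
    intro k
    rw [Finset.sum_boole]
    have : (Finset.Ico (0:ℤ) F).filter (fun t => t < N' k) = Finset.Ico (0:ℤ) (N' k) := by
      rw [Finset.Ico_filter_lt, min_eq_right (hN'F k)]
    rw [this]
    simp [Int.toNat_of_nonneg (hN'0 k)]
  refine ⟨O, ?_, ?_, ?_⟩
  · intro i
    rw [hOdef]
    positivity
  · intro k
    have h1 : ∑ i ∈ Finset.univ.filter (fun i => k ∈ (I i).1), O i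
        = ∑ c, (if k ∈ (I c).1 then (1:ℤ) else 0) * O c := by
      rw [Finset.sum_filter]
      refine Finset.sum_congr rfl fun c _ => ?_
      by_cases h : k ∈ (I c).1 <;> simp [h]
    rw [h1, master (fun s => if k ∈ s then 1 else 0)]
    calc ∑ t ∈ Finset.Ico (0:ℤ) F,
          (if 2 ≤ (L t).card then (if k ∈ L t then (1:ℤ) else 0) else 0)
        ≤ ∑ t ∈ Finset.Ico (0:ℤ) F, (if t < N' k then (1:ℤ) else 0) := by
          refine Finset.sum_le_sum fun t _ => ?_
          by_cases hk : t < N' k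
          · rw [if_pos hk]
            split_ifs <;> norm_num
          · have hkL : k ∉ L t := by simp [hLdef, hk]
            rw [if_neg hk]
            split_ifs <;> simp_all
      _ = min (N k) F := hcount k
  · have h2 := master (fun s => (s.card : ℤ) - 1)
    have hsum : ∑ k, N' k = ∑ t ∈ Finset.Ico (0:ℤ) F, ((L t).card : ℤ) := by
      calc ∑ k, N' k
          = ∑ k, ∑ t ∈ Finset.Ico (0:ℤ) F, (if t < N' k then (1:ℤ) else 0) :=
            Finset.sum_congr rfl fun k _ => (hcount k).symm
        _ = ∑ t ∈ Finset.Ico (0:ℤ) F, ∑ k, (if t < N' k then (1:ℤ) else 0) := Finset.sum_comm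
        _ = ∑ t ∈ Finset.Ico (0:ℤ) F, ((L t).card : ℤ) := by
            refine Finset.sum_congr rfl fun t _ => ?_
            rw [Finset.sum_boole]
    have hgoal : (∑ k : Fin n, min (N k) F) = ∑ k, N' k := rfl
    rw [hgoal, hsum, h2, ← Finset.sum_sub_distrib]
    calc ∑ t ∈ Finset.Ico (0:ℤ) F,
          (((L t).card : ℤ) - if 2 ≤ (L t).card then ((L t).card : ℤ) - 1 else 0)
        ≤ ∑ t ∈ Finset.Ico (0:ℤ) F, (1:ℤ) := by
          refine Finset.sum_le_sum fun t _ => ?_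
          by_cases h : 2 ≤ (L t).card
          · rw [if_pos h]; ring_nf; norm_num
          · rw [if_neg h]
            have : (L t).card ≤ 1 := by omega
            have : ((L t).card : ℤ) ≤ 1 := by exact_mod_cast this
            omega
      _ = F := by
          rw [Finset.sum_const, Int.card_Ico]
          simp [Int.toNat_of_nonneg hF]
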